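/- arXiv:2510.25324 — 2 statements merged into one kernel-verified Lean document; each statement's English description precedes it below -/
import Mathlib

section
/- Let g_1,…,g_m ∈ ℝ, p_1,…,p_m ∈ [0,1] with ∑ p_i = 1, and ε ∈ (0,1]. If there exist ε_1,…,ε_m ≥ 0 with ∑ ε_i ≤ ε, and λ_{1,i}, λ_{2,i} > 0 such that λ_{1,i}·g_i + λ_{2,i}·(p_i − ε_i) < 0 for every i, then ∑_{i=1}^m p_i · 1_{(0,∞)}(g_i) ≤ ε. -/
theorem stmt_3 (m : ℕ) (g p : Fin m → ℝ) (ε : ℝ)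
    (hp : ∀ i, 0 ≤ p i ∧ p i ≤ 1) (hpsum : ∑ i, p i = 1)
    (hε : 0 < ε ∧ ε ≤ 1)
    (h : ∃ (e : Fin m → ℝ) (lam1 lam2 : Fin m → ℝ),
      (∀ i, 0 ≤ e i) ∧ (∑ i, e i) ≤ ε ∧
      (∀ i, 0 < lam1 i) ∧ (∀ i, 0 < lam2 i) ∧
      (∀ i, lam1 i * g i + lam2 i * (p i - e i) < 0)) :
    (∑ i, p i * (if 0 < g i then (1:ℝ) else 0)) ≤ ε := by
  obtain ⟨e, lam1, lam2, he0, hesum, hl1, hl2, hlt⟩ := h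
  refine le_trans (Finset.sum_le_sum fun i _ => ?_) hesum
  by_cases hg : 0 < g i
  · simp only [hg, if_pos, mul_one]
    have h1 : 0 < lam1 i * g i := mul_pos (hl1 i) hg
    have h2 : lam2 i * (p i - e i) < 0 := by nlinarith [hlt i]
    nlinarith [hl2 i]
  · simp [hg, he0 i]
end

section
/- Let V_e ∈ ℝ^{n×N} and V_h ∈ ℝ^{n×M} be vertex matrices, and suppose there exist ζ ∈ ℝ^n, μ, ν ∈ ℝ with −(1/4)ζᵀζ − μ − ν ≥ d² for some d > 0, V_eᵀζ + μ·1 ≥ 0, and −V_hᵀζ + ν·1 ≥ 0. Then for every convex combination x = V_e φ (φ ≥ 0, 1ᵀφ = 1) and y = V_h ψ (ψ ≥ 0, 1ᵀψ = 1), we have ‖x − y‖² ≥ d². That is, the squared Euclidean distance between the two V-polytopes is at least d². -/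
theorem stmt_10 (n N M : ℕ) (Ve : Matrix (Fin n) (Fin N) ℝ)
    (Vh : Matrix (Fin n) (Fin M) ℝ) (ζ : Fin n → ℝ) (μ ν d : ℝ) (hd : 0 < d)
    (hdual : -(1/4) * (∑ i, ζ i ^ 2) - μ - ν ≥ d ^ 2)
    (he : ∀ j, (∑ i, Ve i j * ζ i) + μ ≥ 0)
    (hh : ∀ j, -(∑ i, Vh i j * ζ i) + ν ≥ 0)
    (φ : Fin N → ℝ) (ψ : Fin M → ℝ)
    (hφ : ∀ j, 0 ≤ φ j) (hφ1 : ∑ j, φ j = 1)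
    (hψ : ∀ j, 0 ≤ ψ j) (hψ1 : ∑ j, ψ j = 1) :
    ∑ i, (Ve.mulVec φ i - Vh.mulVec ψ i) ^ 2 ≥ d ^ 2 := by
  set x := Ve.mulVec φ with hxdef
  set y := Vh.mulVec ψ with hydef
  have hx : ∑ i, ζ i * x i = ∑ j, (∑ i, Ve i j * ζ i) * φ j := by
    simp_rw [hxdef, Matrix.mulVec, dotProduct, Finset.mul_sum, Finset.sum_mul]
    rw [Finset.sum_comm]
    exact Finset.sum_congr rfl fun j _ => Finset.sum_congr rfl fun i _ => by ring
  have hy : ∑ i, ζ i * y i = ∑ j, (∑ i, Vh i j * ζ i) * ψ j := by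
    simp_rw [hydef, Matrix.mulVec, dotProduct, Finset.mul_sum, Finset.sum_mul]
    rw [Finset.sum_comm]
    exact Finset.sum_congr rfl fun j _ => Finset.sum_congr rfl fun i _ => by ring
  have hxb : ∑ i, ζ i * x i ≥ -μ := by
    rw [hx]
    calc ∑ j, (∑ i, Ve i j * ζ i) * φ j ≥ ∑ j, (-μ) * φ j := by
          apply Finset.sum_le_sum
          intro j _
          exact mul_le_mul_of_nonneg_right (by linarith [he j]) (hφ j)
      _ = -μ := by rw [← Finset.mul_sum, hφ1, mul_one]
  have hyb : ∑ i, ζ i * y i ≤ ν := by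
    rw [hy]
    calc ∑ j, (∑ i, Vh i j * ζ i) * ψ j ≤ ∑ j, ν * ψ j := by
          apply Finset.sum_le_sum
          intro j _
          exact mul_le_mul_of_nonneg_right (by linarith [hh j]) (hψ j)
      _ = ν := by rw [← Finset.mul_sum, hψ1, mul_one]
  have hsq : 0 ≤ ∑ i, (x i - y i - ζ i / 2) ^ 2 :=
    Finset.sum_nonneg fun i _ => sq_nonneg _
  have hexp : ∑ i, (x i - y i - ζ i / 2) ^ 2 =
      ∑ i, (x i - y i) ^ 2 - (∑ i, ζ i * x i - ∑ i, ζ i * y i)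
        + (1/4) * ∑ i, ζ i ^ 2 := by
    rw [← Finset.sum_sub_distrib, Finset.mul_sum, ← Finset.sum_sub_distrib,
      ← Finset.sum_add_distrib]
    exact Finset.sum_congr rfl fun i _ => by ring
  linarith [hsq, hexp]
end
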